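/- There exists a numerical constant C > 0 such that for every σ² ∈ (0,1) and every real number α ≥ σ: (i) the supremum, over all Lebesgue-measurable sets A ⊆ ℝ with Lebesgue measure at most α, of (1/√(2πσ²)) ∫_A e^{−t²/(2σ²)} dt equals (1/√(2πσ²)) ∫_{−α/2}^{α/2} e^{−t²/(2σ²)} dt; and (ii) this quantity is at most 1 − e^{−Cα²/σ²}. -/

import Mathlib

/-!
The centred interval `I` of length `α` is a superlevel set `{t | e^{-t²/(2σ²)} ≥ e^{-α²/(8σ²)}}` of
the Gaussian density, so it carries the most mass among sets of measure at most `α` (the bathtub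
principle): what a competitor `A` gains outside `I` is at most the threshold times `|A \ I|`, and
what it loses inside `I` is at least the threshold times `|I \ A| ≥ |A \ I|`.
For the upper bound, the mass missed by `I` includes the two flanks `α/2 ≤ |t| ≤ α`, of total
length `α ≥ σ`, on which the density is at least `e^{-α²/(2σ²)}`.
-/

open MeasureTheory Set Real

theorem measure_sdiff_le_measure_sdiff {X : Type*} [MeasurableSpace X] {μ : Measure X}
    {s t : Set X} (hs : NullMeasurableSet s μ) (ht : NullMeasurableSet t μ) (h : μ s ≤ μ t)
    (hfin : μ (s ∩ t) ≠ ⊤) : μ (s \ t) ≤ μ (t \ s) := by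
  rwa [← ENNReal.add_le_add_iff_left hfin, measure_inter_add_sdiff₀ _ ht, inter_comm,
    measure_inter_add_sdiff₀ _ hs]

theorem setIntegral_le_setIntegral_of_measure_le {X : Type*} [MeasurableSpace X]
    {μ : Measure X} {f : X → ℝ} {s t : Set X} {c : ℝ} (hs : MeasurableSet s) (ht : MeasurableSet t)
    (hμ : μ s ≤ μ t) (hμt : μ t ≠ ⊤) (hc : 0 ≤ c) (hfs : IntegrableOn f s μ)
    (hft : IntegrableOn f t μ) (h_le : ∀ x ∈ s \ t, f x ≤ c) (h_ge : ∀ x ∈ t \ s, c ≤ f x) :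
    ∫ x in s, f x ∂μ ≤ ∫ x in t, f x ∂μ := by
  have hμs : μ s ≠ ⊤ := ne_top_of_le_ne_top hμt hμ
  have h_sdiff : μ.real (s \ t) ≤ μ.real (t \ s) :=
    ENNReal.toReal_mono (measure_ne_top_of_subset sdiff_subset hμt)
      (measure_sdiff_le_measure_sdiff hs.nullMeasurableSet ht.nullMeasurableSet hμ
        (measure_ne_top_of_subset inter_subset_left hμs))
  have h_out : ∫ x in s \ t, f x ∂μ ≤ c * μ.real (s \ t) := by
    rw [mul_comm, ← smul_eq_mul, ← setIntegral_const]
    exact setIntegral_mono_on (hfs.mono_set sdiff_subset)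
      (integrableOn_const (measure_ne_top_of_subset sdiff_subset hμs)) (hs.diff ht) h_le
  have h_in : c * μ.real (t \ s) ≤ ∫ x in t \ s, f x ∂μ :=
    setIntegral_ge_of_const_le_real (ht.diff hs) (measure_ne_top_of_subset sdiff_subset hμt)
      h_ge (hft.mono_set sdiff_subset)
  rw [← integral_inter_add_sdiff ht hfs, ← integral_inter_add_sdiff hs hft, inter_comm]
  nlinarith [mul_le_mul_of_nonneg_left h_sdiff hc]

theorem exp_neg_sq_div_le_of_abs_le (σ : ℝ) {s t : ℝ} (h : |s| ≤ |t|) :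
    exp (-t ^ 2 / (2 * σ ^ 2)) ≤ exp (-s ^ 2 / (2 * σ ^ 2)) := by
  gcongr exp ?_
  exact div_le_div_of_nonneg_right (neg_le_neg (sq_le_sq.2 h)) (by positivity)

theorem exp_neg_sq_div_eq (σ t : ℝ) :
    exp (-t ^ 2 / (2 * σ ^ 2)) = exp (-(2 * σ ^ 2)⁻¹ * t ^ 2) := by
  ring_nf

theorem integrable_exp_neg_sq_div {σ : ℝ} (hσ : σ ≠ 0) :
    Integrable fun t : ℝ => exp (-t ^ 2 / (2 * σ ^ 2)) := by
  simp_rw [exp_neg_sq_div_eq]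
  exact integrable_exp_neg_mul_sq (by positivity)

theorem integral_exp_neg_sq_div (σ : ℝ) :
    ∫ t : ℝ, exp (-t ^ 2 / (2 * σ ^ 2)) = √(2 * π * σ ^ 2) := by
  simp_rw [exp_neg_sq_div_eq, integral_gaussian, div_inv_eq_mul]
  ring_nf

theorem volume_Ioc_neg_half_half (α : ℝ) :
    volume (Ioc (-(α / 2)) (α / 2)) = ENNReal.ofReal α := by
  rw [Real.volume_Ioc]; ring_nf

theorem setIntegral_exp_neg_sq_div_le_Ioc {σ α : ℝ} (hσ : σ ≠ 0) (hα : 0 ≤ α) {A : Set ℝ}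
    (hA : MeasurableSet A) (hvol : volume A ≤ ENNReal.ofReal α) :
    ∫ t in A, exp (-t ^ 2 / (2 * σ ^ 2))
      ≤ ∫ t in Ioc (-(α / 2)) (α / 2), exp (-t ^ 2 / (2 * σ ^ 2)) := by
  have hvolI := volume_Ioc_neg_half_half α
  have hi := integrable_exp_neg_sq_div hσ
  refine setIntegral_le_setIntegral_of_measure_le (c := exp (-(α / 2) ^ 2 / (2 * σ ^ 2)))
    hA measurableSet_Ioc (hvolI ▸ hvol) (by simp [hvolI]) (exp_pos _).le
    hi.integrableOn hi.integrableOn ?_ ?_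
  · rintro x ⟨-, hx⟩
    refine exp_neg_sq_div_le_of_abs_le σ ?_
    rw [abs_of_nonneg (by positivity : (0 : ℝ) ≤ α / 2), le_abs]
    by_contra! h
    exact hx ⟨by linarith, h.1.le⟩
  · rintro x ⟨⟨hx₁, hx₂⟩, -⟩
    refine exp_neg_sq_div_le_of_abs_le σ ?_
    rw [abs_of_nonneg (by positivity : (0 : ℝ) ≤ α / 2)]
    exact abs_le.2 ⟨hx₁.le, hx₂⟩

theorem mul_le_intervalIntegral_of_le_on {f : ℝ → ℝ} {a b c : ℝ} (hab : a ≤ b)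
    (hf : IntervalIntegrable f volume a b) (h : ∀ x ∈ Icc a b, c ≤ f x) :
    (b - a) * c ≤ ∫ x in a..b, f x := by
  simpa using intervalIntegral.integral_mono_on hab intervalIntegrable_const hf h

theorem intervalIntegral_exp_neg_sq_div_add_le {σ α : ℝ} (hσ : σ ≠ 0) (hα : 0 ≤ α) :
    (∫ t in (-(α / 2))..(α / 2), exp (-t ^ 2 / (2 * σ ^ 2))) + α * exp (-α ^ 2 / (2 * σ ^ 2))
      ≤ √(2 * π * σ ^ 2) := by
  set f := fun t : ℝ => exp (-t ^ 2 / (2 * σ ^ 2))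
  have hi := integrable_exp_neg_sq_div hσ
  have hii : ∀ a b, IntervalIntegrable f volume a b := fun _ _ ↦ hi.intervalIntegrable
  have hflank : ∀ x ∈ Icc (-α) (-(α / 2)) ∪ Icc (α / 2) α, f α ≤ f x := fun x hx ↦
    exp_neg_sq_div_le_of_abs_le σ <| by
      rw [abs_of_nonneg hα, abs_le]
      rcases hx with ⟨h₁, h₂⟩ | ⟨h₁, h₂⟩ <;> constructor <;> linarith
  have h_left := mul_le_intervalIntegral_of_le_on (by linarith) (hii _ _)
    fun x hx ↦ hflank x (.inl hx)
  have h_right := mul_le_intervalIntegral_of_le_on (by linarith) (hii _ _)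
    fun x hx ↦ hflank x (.inr hx)
  have h_split : (∫ t in (-α)..(-(α / 2)), f t) + (∫ t in (-(α / 2))..(α / 2), f t)
      + (∫ t in (α / 2)..α, f t) = ∫ t in (-α)..α, f t := by
    rw [intervalIntegral.integral_add_adjacent_intervals (hii _ _) (hii _ _),
      intervalIntegral.integral_add_adjacent_intervals (hii _ _) (hii _ _)]
  have h_total : ∫ t in (-α)..α, f t ≤ √(2 * π * σ ^ 2) := by
    rw [intervalIntegral.integral_of_le (by linarith), ← integral_exp_neg_sq_div σ]
    exact setIntegral_le_integral hi (.of_forall fun t ↦ (exp_pos _).le)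
  linarith

theorem sqrt_two_pi_mul_exp_le {σ α : ℝ} (hσ : 0 < σ) (hα : σ ≤ α) :
    √(2 * π * σ ^ 2) * exp (-(3 * α ^ 2 / σ ^ 2)) ≤ α * exp (-α ^ 2 / (2 * σ ^ 2)) := by
  have h_sqrt : √(2 * π * σ ^ 2) ≤ 3 * α := by
    rw [sqrt_le_left (by linarith)]
    nlinarith [pi_lt_four, sq_nonneg σ]
  have h_ratio : 1 ≤ α ^ 2 / σ ^ 2 := by
    rw [one_le_div (by positivity)]; nlinarith
  -- `e^{5t/2} ≥ 1 + 5t/2 ≥ 3` for `t = α²/σ² ≥ 1`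
  have h_exp : 3 * exp (-(3 * α ^ 2 / σ ^ 2)) ≤ exp (-α ^ 2 / (2 * σ ^ 2)) := by
    have h_eq : exp (-α ^ 2 / (2 * σ ^ 2))
        = exp (-(3 * α ^ 2 / σ ^ 2)) * exp (5 / 2 * (α ^ 2 / σ ^ 2)) := by
      rw [← exp_add]; congr 1; field_simp; ring
    rw [h_eq, mul_comm]
    gcongr
    linarith [add_one_le_exp (5 / 2 * (α ^ 2 / σ ^ 2))]
  calc √(2 * π * σ ^ 2) * exp (-(3 * α ^ 2 / σ ^ 2))
      ≤ 3 * α * exp (-(3 * α ^ 2 / σ ^ 2)) := by gcongr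
    _ ≤ α * exp (-α ^ 2 / (2 * σ ^ 2)) := by
      nlinarith [mul_le_mul_of_nonneg_left h_exp (hσ.le.trans hα)]

/-- Among all measurable sets of Lebesgue measure at most `α`, the Gaussian measure (variance
`σ²`) is maximized by the centered interval `[-α/2, α/2]`, and this maximal value is at most
`1 - e^{-Cα²/σ²}` for a numerical constant `C`. -/
theorem gaussian_measure_of_small_sets :
    ∃ C : ℝ, 0 < C ∧
      ∀ σ : ℝ, 0 < σ → σ ^ 2 < 1 →
      ∀ α : ℝ, σ ≤ α →
        (sSup {x : ℝ | ∃ A : Set ℝ, MeasurableSet A ∧ volume A ≤ ENNReal.ofReal α ∧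
            x = (∫ t in A, Real.exp (-t ^ 2 / (2 * σ ^ 2))) /
              Real.sqrt (2 * Real.pi * σ ^ 2)}
          = (∫ t in (-(α / 2))..(α / 2), Real.exp (-t ^ 2 / (2 * σ ^ 2))) /
              Real.sqrt (2 * Real.pi * σ ^ 2)) ∧
        (∫ t in (-(α / 2))..(α / 2), Real.exp (-t ^ 2 / (2 * σ ^ 2))) /
              Real.sqrt (2 * Real.pi * σ ^ 2)
          ≤ 1 - Real.exp (-(C * α ^ 2 / σ ^ 2)) := by
  refine ⟨3, by norm_num, fun σ hσ _ α hα ↦ ?_⟩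
  have hα₀ : 0 ≤ α := hσ.le.trans hα
  constructor
  · rw [intervalIntegral.integral_of_le (by linarith)]
    refine IsGreatest.csSup_eq
      ⟨⟨_, measurableSet_Ioc, (volume_Ioc_neg_half_half α).le, rfl⟩, ?_⟩
    rintro x ⟨A, hA, hvol, rfl⟩
    exact div_le_div_of_nonneg_right
      (setIntegral_exp_neg_sq_div_le_Ioc hσ.ne' hα₀ hA hvol) (sqrt_nonneg _)
  · rw [div_le_iff₀ (by positivity)]
    linarith [intervalIntegral_exp_neg_sq_div_add_le hσ.ne' hα₀, sqrt_two_pi_mul_exp_le hσ hα]
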